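/- Let s_1, ..., s_{n+1} be exchangeable real-valued random variables. Let q̂ be the ⌈(1-α)(n+1)⌉-th smallest value among s_1, ..., s_n, ∞ (i.e., if ⌈(1-α)(n+1)⌉ ≤ n it is the order statistic of that rank among s_1,...,s_n, otherwise +∞). Then P(s_{n+1} ≤ q̂) ≥ 1 - α. -/

import Mathlib

/-!
By exchangeability, the strict rank of `s_{n+1}` (the number of scores strictly below it) has the
same law as the strict rank of any other score. Whatever the values, at least `k` of the `n + 1`
scores have strict rank `< k` (all those not exceeding the `k`-th smallest one), so summing over
the scores gives `(n + 1) P(rank(s_{n+1}) < k) ≥ k ≥ (1 - α)(n + 1)`. Finally `s_{n+1} ≤ q̂` says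
exactly that fewer than `k` of `s_1, …, s_n` lie strictly below `s_{n+1}`, i.e. that
`rank(s_{n+1}) < k`.
-/

open MeasureTheory

/-- The `k`-th smallest value (1-indexed) of a finite tuple of reals. -/
noncomputable def kthSmallest {n : ℕ} (f : Fin n → ℝ) (k : ℕ) : ℝ :=
  ((List.ofFn f).mergeSort (fun a b => a ≤ b)).getD (k - 1) 0

open Finset

namespace List

variable {α : Type*} [Preorder α] {l : List α}

theorem SortedLE.lt_countP_of_forall_le (hl : l.SortedLE) {k : ℕ} (hk : k < l.length)
    {p : α → Bool} (hp : ∀ y, y ≤ l[k] → p y) : k < l.countP p := by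
  have hprefix : (l.take (k + 1)).countP p = k + 1 := by
    rw [countP_eq_length.2, length_take_of_le hk]
    intro y hy
    obtain ⟨i, hi, rfl⟩ := getElem_of_mem hy
    rw [length_take_of_le hk] at hi
    rw [getElem_take]
    exact hp _ (hl.getElem_le_getElem_of_le (by omega))
  calc k < (l.take (k + 1)).countP p := by omega
    _ ≤ l.countP p := (take_sublist _ l).countP_le

theorem SortedLE.countP_le_of_forall_ge (hl : l.SortedLE) {k : ℕ} (hk : k < l.length)
    {p : α → Bool} (hp : ∀ y, l[k] ≤ y → p y = false) : l.countP p ≤ k := by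
  have hsuffix : (l.drop k).countP p = 0 := by
    rw [countP_eq_zero]
    intro y hy
    obtain ⟨i, hi, rfl⟩ := getElem_of_mem hy
    rw [getElem_drop]
    simp [hp _ (hl.getElem_le_getElem_of_le (Nat.le_add_right k i))]
  calc l.countP p = (l.take k).countP p + (l.drop k).countP p := by
        rw [← countP_append, take_append_drop]
    _ ≤ k := by
        rw [hsuffix, add_zero]
        exact (countP_le_length).trans (length_take_le _ _)

theorem countP_ofFn {β : Type*} {m : ℕ} (f : Fin m → β) (p : β → Bool) :
    (List.ofFn f).countP p = #{i | p (f i)} := by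
  induction m with
  | zero => simp
  | succ m ih =>
    rw [List.ofFn_succ, List.countP_cons, ih, Fin.card_filter_univ_succ', add_comm]

end List

theorem kthSmallest_eq_getElem {m k : ℕ} (f : Fin m → ℝ) (hk1 : 1 ≤ k) (hkm : k ≤ m) :
    kthSmallest f k = ((List.ofFn f).mergeSort (· ≤ ·))[k - 1]'(by simp; omega) :=
  List.getD_eq_getElem _ _ _

theorem countP_mergeSort_ofFn {m : ℕ} (f : Fin m → ℝ) (p : ℝ → Prop) [DecidablePred p] :
    ((List.ofFn f).mergeSort (· ≤ ·)).countP (fun y => decide (p y)) = #{i | p (f i)} := by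
  rw [(List.mergeSort_perm _ _).countP_eq, List.countP_ofFn]
  simp only [decide_eq_true_eq]

theorem le_kthSmallest_iff {m k : ℕ} (f : Fin m → ℝ) (hk1 : 1 ≤ k) (hkm : k ≤ m) (x : ℝ) :
    x ≤ kthSmallest f k ↔ #{i | f i < x} < k := by
  have hs := List.sortedLE_mergeSort (l := List.ofFn f)
  have hk : k - 1 < ((List.ofFn f).mergeSort (· ≤ ·)).length := by simp; omega
  rw [kthSmallest_eq_getElem f hk1 hkm, ← countP_mergeSort_ofFn f (· < x)]
  constructor
  · intro hx
    have := hs.countP_le_of_forall_ge hk (p := fun y => decide (y < x))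
      (fun y hy => by simpa using hx.trans hy)
    omega
  · intro hcount
    by_contra! hx
    have := hs.lt_countP_of_forall_le hk (p := fun y => decide (y < x))
      (fun y hy => by simpa using hy.trans_lt hx)
    omega

theorem le_card_filter_le_kthSmallest {m k : ℕ} (f : Fin m → ℝ) (hk1 : 1 ≤ k) (hkm : k ≤ m) :
    k ≤ #{i | f i ≤ kthSmallest f k} := by
  have hk : k - 1 < ((List.ofFn f).mergeSort (· ≤ ·)).length := by simp; omega
  rw [← countP_mergeSort_ofFn f (· ≤ kthSmallest f k), kthSmallest_eq_getElem f hk1 hkm]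
  have := List.sortedLE_mergeSort.lt_countP_of_forall_le hk (p := fun y => decide (y ≤ _))
    (fun y hy => by simpa using hy)
  omega

section StrictRank

variable {ι : Type*} [Fintype ι]

noncomputable def strictRank (a : ι → ℝ) (j : ι) : ℕ := #{i | a i < a j}

theorem strictRank_comp_perm (a : ι → ℝ) (σ : Equiv.Perm ι) (j : ι) :
    strictRank (a ∘ σ) j = strictRank a (σ j) :=
  card_equiv σ fun i => by simp

theorem strictRank_last {m : ℕ} (a : Fin (m + 1) → ℝ) :
    strictRank a (Fin.last m) = #{i : Fin m | a i.castSucc < a (Fin.last m)} := by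
  rw [strictRank, Fin.univ_castSuccEmb, filter_cons, if_neg (lt_irrefl _), filter_map, card_map]
  rfl

theorem le_card_strictRank_lt {m k : ℕ} (a : Fin m → ℝ) (hk1 : 1 ≤ k) (hkm : k ≤ m) :
    k ≤ #{j | strictRank a j < k} := by
  refine (le_card_filter_le_kthSmallest a hk1 hkm).trans (card_le_card fun j hj => ?_)
  simp only [mem_filter, mem_univ, true_and] at hj ⊢
  calc strictRank a j ≤ #{i | a i < kthSmallest a k} :=
        card_le_card fun i hi => by
          simp only [mem_filter, mem_univ, true_and] at hi ⊢
          exact hi.trans_le hj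
    _ < k := (le_kthSmallest_iff a hk1 hkm _).1 le_rfl

theorem measurable_strictRank (j : ι) :
    Measurable fun a : ι → ℝ => strictRank a j := by
  simp_rw [strictRank, card_filter]
  exact Finset.measurable_sum _ fun i _ => Measurable.ite
    (measurableSet_lt (measurable_pi_apply i) (measurable_pi_apply j)) measurable_const
    measurable_const

theorem measurableSet_strictRank_lt (j : ι) (k : ℕ) :
    MeasurableSet {a : ι → ℝ | strictRank a j < k} :=
  measurable_strictRank j measurableSet_Iio

theorem measure_strictRank_lt_eq [DecidableEq ι]
    (μ : Measure (ι → ℝ)) (hμ : ∀ σ : Equiv.Perm ι, μ.map (fun a => a ∘ σ) = μ)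
    (k : ℕ) (i j : ι) :
    μ {a | strictRank a i < k} = μ {a | strictRank a j < k} := by
  have hσ : Measurable fun a : ι → ℝ => a ∘ Equiv.swap i j := by fun_prop
  have hpre : {a | strictRank a i < k}
      = (fun a => a ∘ Equiv.swap i j) ⁻¹' {a | strictRank a j < k} := by
    ext a
    simp [strictRank_comp_perm]
  rw [hpre, ← Measure.map_apply hσ (measurableSet_strictRank_lt j k), hμ]

end StrictRank

open scoped Classical in
theorem mul_measure_univ_le_sum_measure {α ι : Type*} [MeasurableSpace α] [Fintype ι]
    (μ : Measure α) {s : ι → Set α} (hs : ∀ i, MeasurableSet (s i)) {k : ℕ}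
    (hk : ∀ x, k ≤ #{i | x ∈ s i}) :
    k * μ Set.univ ≤ ∑ i, μ (s i) := by
  calc (k : ENNReal) * μ Set.univ = ∫⁻ _, (k : ENNReal) ∂μ := by rw [lintegral_const]
    _ ≤ ∫⁻ x, ∑ i, (s i).indicator 1 x ∂μ := lintegral_mono fun x => by
        simpa [Set.indicator_apply, Finset.sum_boole] using hk x
    _ = ∑ i, μ (s i) := by
        rw [lintegral_finsetSum _ fun i _ => measurable_one.indicator (hs i)]
        exact sum_congr rfl fun i _ => lintegral_indicator_one (hs i)

theorem le_mul_measureReal_strictRank_lt {m : ℕ} (μ : Measure (Fin m → ℝ))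
    [IsProbabilityMeasure μ] (hμ : ∀ σ : Equiv.Perm (Fin m), μ.map (fun a => a ∘ σ) = μ)
    {k : ℕ} (hk1 : 1 ≤ k) (hkm : k ≤ m) (j : Fin m) :
    (k : ℝ) ≤ m * μ.real {a | strictRank a j < k} := by
  have h : (k : ENNReal) ≤ m * μ {a | strictRank a j < k} := by
    calc (k : ENNReal) = k * μ Set.univ := by rw [measure_univ, mul_one]
      _ ≤ ∑ i, μ {a | strictRank a i < k} :=
          mul_measure_univ_le_sum_measure μ
            (measurableSet_strictRank_lt · k)
            fun a => by convert le_card_strictRank_lt a hk1 hkm using 3; exact Iff.rfl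
      _ = m * μ {a | strictRank a j < k} := by
          simp [measure_strictRank_lt_eq μ hμ k _ j]
  simpa [measureReal_def] using
    ENNReal.toReal_mono (ENNReal.mul_ne_top (by simp) (measure_ne_top _ _)) h

theorem split_conformal_coverage_general
    {Ω : Type*} [MeasurableSpace Ω] (P : Measure Ω) [IsProbabilityMeasure P]
    (n : ℕ) (α : ℝ) (hα : α ∈ Set.Ioo (0 : ℝ) 1)
    (s : Fin (n + 1) → Ω → ℝ) (hmeas : ∀ i, Measurable (s i))
    (hexch : ∀ σ : Equiv.Perm (Fin (n + 1)),
      Measure.map (fun ω => fun i => s (σ i) ω) P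
        = Measure.map (fun ω => fun i => s i ω) P)
    (k : ℕ) (hk : k = ⌈(1 - α) * (n + 1)⌉₊)
    (qhat : Ω → EReal)
    (hq : ∀ ω, qhat ω =
      if k ≤ n then ((kthSmallest (fun i : Fin n => s i.castSucc ω) k : ℝ) : EReal)
      else ⊤) :
    1 - α ≤ (P {ω | ((s (Fin.last n) ω : ℝ) : EReal) ≤ qhat ω}).toReal := by
  obtain ⟨hα0, hα1⟩ := hα
  obtain hkn | hkn := lt_or_ge n k
  · simp [hq, hkn.not_ge, hα0.le]
  have hk1 : 1 ≤ k := hk ▸ Nat.one_le_ceil_iff.2 (by nlinarith)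
  set F : Ω → Fin (n + 1) → ℝ := fun ω i => s i ω
  have hF : Measurable F := measurable_pi_lambda _ hmeas
  have hevent : {ω | ((s (Fin.last n) ω : ℝ) : EReal) ≤ qhat ω}
      = F ⁻¹' {a | strictRank a (Fin.last n) < k} := by
    ext ω
    simp [hq, hkn, le_kthSmallest_iff _ hk1 hkn, strictRank_last, F]
  have hexch_law (σ : Equiv.Perm (Fin (n + 1))) : (P.map F).map (fun a => a ∘ σ) = P.map F := by
    have hσ : Measurable fun a : Fin (n + 1) → ℝ => a ∘ σ := by fun_prop
    rw [Measure.map_map hσ hF]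
    exact hexch σ
  have := Measure.isProbabilityMeasure_map (μ := P) hF.aemeasurable
  have hcount := le_mul_measureReal_strictRank_lt (P.map F) hexch_law hk1 (by omega) (Fin.last n)
  rw [map_measureReal_apply hF (measurableSet_strictRank_lt _ _), ← hevent] at hcount
  have hceil : (1 - α) * (n + 1) ≤ k := hk ▸ Nat.le_ceil _
  rw [← measureReal_def]
  push_cast at hcount
  nlinarith

/-- **Split conformal prediction coverage guarantee.**
If `s 0, …, s n` (i.e. `s_1, …, s_{n+1}`) are exchangeable real random variables and
`q̂` is the `⌈(1-α)(n+1)⌉`-th smallest value among `s_1, …, s_n, ∞`, then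
`P(s_{n+1} ≤ q̂) ≥ 1 - α`. -/
theorem split_conformal_coverage
    {Ω : Type*} [MeasurableSpace Ω] (P : Measure Ω) [IsProbabilityMeasure P]
    (n : ℕ) (hn : 0 < n) (α : ℝ) (hα : α ∈ Set.Ioo (0 : ℝ) 1)
    (s : Fin (n + 1) → Ω → ℝ) (hmeas : ∀ i, Measurable (s i))
    (hexch : ∀ σ : Equiv.Perm (Fin (n + 1)),
      Measure.map (fun ω => fun i => s (σ i) ω) P
        = Measure.map (fun ω => fun i => s i ω) P)
    (k : ℕ) (hk : k = ⌈(1 - α) * (n + 1)⌉₊)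
    (qhat : Ω → EReal)
    (hq : ∀ ω, qhat ω =
      if k ≤ n then ((kthSmallest (fun i : Fin n => s i.castSucc ω) k : ℝ) : EReal)
      else ⊤) :
    1 - α ≤ (P {ω | ((s (Fin.last n) ω : ℝ) : EReal) ≤ qhat ω}).toReal :=
  split_conformal_coverage_general P n α hα s hmeas hexch k hk qhat hq
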